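/- Let s ∈ F_{pd} be a p-th syzygy of X ⊂ P^n with (I_X)_d = 0, regarded via the inclusion F_{pd} ↪ Λ^{p−1}V ⊗ (I_X)_{d+1} as s = Σ_α f_α ⊗ v_α in a basis (v_α) of Λ^{p−1}V. Then the vanishing locus of the twisted (p−1)-form associated to s equals the common vanishing locus V(I(s)) of the polynomials f_α, i.e., Syz(s) = V(I(s)). -/

import Mathlib

open scoped TensorProduct
open MvPolynomial

namespace Module.Basis

variable {R M N P ι : Type*} [CommSemiring R] [AddCommMonoid M] [Module R M]
  [AddCommMonoid N] [Module R N] [AddCommMonoid P] [Module R P] [Fintype ι]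

theorem sum_tmul_eq_zero_iff (b : Basis ι R M) (n : ι → N) :
    ∑ i, b i ⊗ₜ[R] n i = 0 ↔ ∀ i, n i = 0 := by
  refine ⟨fun h i => ?_, fun h => by simp [h]⟩
  have hsupp : Finsupp.equivFunOnFinite.symm n = 0 :=
    TensorProduct.sum_tmul_basis_left_eq_zero b _ <| by
      rwa [Finsupp.sum_fintype _ _ (fun _ => TensorProduct.tmul_zero N _)]
  simpa using DFunLike.congr_fun hsupp i

theorem lTensor_sum_tmul_eq_zero_iff (b : Basis ι R M) (φ : N →ₗ[R] P) (n : ι → N) :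
    φ.lTensor M (∑ i, b i ⊗ₜ[R] n i) = 0 ↔ ∀ i, φ (n i) = 0 := by
  simpa only [map_sum, LinearMap.lTensor_tmul] using b.sum_tmul_eq_zero_iff (fun i => φ (n i))

end Module.Basis

theorem syzygy_scheme_eq_vanishing_of_syzygy_ideal_general
    {V : Type*} [AddCommGroup V] [Module ℂ V]
    {n p : ℕ} {ι : Type*} [Fintype ι]
    (β : Module.Basis ι ℂ (⋀[ℂ]^(p - 1) V))
    (f : ι → MvPolynomial (Fin (n + 1)) ℂ)
    (s : (⋀[ℂ]^(p - 1) V) ⊗[ℂ] MvPolynomial (Fin (n + 1)) ℂ)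
    (hs : s = ∑ α, β α ⊗ₜ f α) :
    {x : Fin (n + 1) → ℂ |
        TensorProduct.map LinearMap.id (MvPolynomial.aeval x).toLinearMap s = 0}
      = {x : Fin (n + 1) → ℂ | ∀ α, MvPolynomial.eval x (f α) = 0} := by
  subst hs
  ext x
  -- `TensorProduct.map LinearMap.id` is `lTensor`, and over `ℂ` the map `aeval x` is `eval x`.
  exact β.lTensor_sum_tmul_eq_zero_iff (aeval x).toLinearMap f

theorem syzygy_scheme_eq_vanishing_of_syzygy_ideal
    {V : Type*} [AddCommGroup V] [Module ℂ V] [FiniteDimensional ℂ V]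
    {n d p : ℕ} {ι : Type*} [Fintype ι]
    (I : Ideal (MvPolynomial (Fin (n + 1)) ℂ))
    (hId : ∀ g ∈ I, g.IsHomogeneous d → g = 0)
    (β : Module.Basis ι ℂ (⋀[ℂ]^(p - 1) V))
    (f : ι → MvPolynomial (Fin (n + 1)) ℂ)
    (hf : ∀ α, f α ∈ I ∧ (f α).IsHomogeneous (d + 1))
    (s : (⋀[ℂ]^(p - 1) V) ⊗[ℂ] MvPolynomial (Fin (n + 1)) ℂ)
    (hs : s = ∑ α, β α ⊗ₜ f α) :
    {x : Fin (n + 1) → ℂ |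
        TensorProduct.map LinearMap.id (MvPolynomial.aeval x).toLinearMap s = 0}
      = {x : Fin (n + 1) → ℂ | ∀ α, MvPolynomial.eval x (f α) = 0} :=
  syzygy_scheme_eq_vanishing_of_syzygy_ideal_general β f s hs
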